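/- There exists a unique associative product ∘ : S̃_n × S̃_n → S̃_n (the Demazure or 0-Hecke product) satisfying s_i ∘ s_i = s_i for all i and π' ∘ π'' = π'π'' whenever ℓ(π'π'') = ℓ(π') + ℓ(π''). Moreover, for any involution z ∈ Ĩ_n, i ∈ ℤ, the element s_i ∘ z ∘ s_i equals: z if z(i) > z(i+1); z s_i if z(i) = i and z(i+1) = i+1; and s_i z s_i otherwise. -/

import Mathlib

open scoped TensorProduct

/-- Membership in the affine symmetric group `S̃_n`, viewed inside `Equiv.Perm ℤ`. -/
def IsAffine (n : ℕ) (π : Equiv.Perm ℤ) : Prop :=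
  (∀ i : ℤ, π (i + n) = π i + n) ∧
  (∑ i ∈ Finset.Icc (1 : ℤ) (n : ℤ), π i) = ∑ i ∈ Finset.Icc (1 : ℤ) (n : ℤ), i

/-- The underlying function of the affine reflection `t_{ij}`. -/
def affTFun (n : ℕ) (i j k : ℤ) : ℤ :=
  if (k - i) % (n : ℤ) = 0 then k - i + j
  else if (k - j) % (n : ℤ) = 0 then k - j + i
  else k

theorem affTFun_involutive {n : ℕ} {i j : ℤ} (h : ¬ (j - i) % (n : ℤ) = 0) :
    Function.Involutive (affTFun n i j) := by
  have key : ∀ a : ℤ, a % (n : ℤ) = 0 ↔ (n : ℤ) ∣ a :=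
    fun a => (@Int.dvd_iff_emod_eq_zero (n : ℤ) a).symm
  rw [key] at h
  intro k
  by_cases h1 : (n : ℤ) ∣ (k - i)
  · have h2 : ¬ (n : ℤ) ∣ (k - i + j - i) := by
      intro hd
      apply h
      have h5 : j - i = (k - i + j - i) - (k - i) := by ring
      rw [h5]
      exact dvd_sub hd h1
    have h3 : (n : ℤ) ∣ (k - i + j - j) := by
      have h5 : k - i + j - j = k - i := by ring
      rw [h5]; exact h1
    have e1 : affTFun n i j k = k - i + j := by simp [affTFun, key, h1]
    have e2 : affTFun n i j (k - i + j) = k := by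
      simp only [affTFun, key]
      rw [if_neg h2, if_pos h3]
      ring
    rw [e1, e2]
  · by_cases h2 : (n : ℤ) ∣ (k - j)
    · have h3 : (n : ℤ) ∣ (k - j + i - i) := by
        have h5 : k - j + i - i = k - j := by ring
        rw [h5]; exact h2
      have e1 : affTFun n i j k = k - j + i := by simp [affTFun, key, h1, h2]
      have e2 : affTFun n i j (k - j + i) = k := by
        simp only [affTFun, key]
        rw [if_pos h3]
        ring
      rw [e1, e2]
    · have e1 : affTFun n i j k = k := by simp [affTFun, key, h1, h2]
      rw [e1, e1]

/-- The affine reflection `t_{ij}` (interpreted as the identity when `i ≡ j (mod n)`). -/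
noncomputable def affT (n : ℕ) (i j : ℤ) : Equiv.Perm ℤ :=
  if h : (j - i) % (n : ℤ) = 0 then 1
  else Function.Involutive.toPerm _ (affTFun_involutive h)

/-- The simple reflection `s_i = t_{i,i+1}` of `S̃_n`. -/
noncomputable def affS (n : ℕ) (i : ℤ) : Equiv.Perm ℤ := affT n i (i + 1)

/-- Coxeter length: minimal length of a word in the simple reflections `s_1, …, s_n`. -/
noncomputable def wordLength (n : ℕ) (π : Equiv.Perm ℤ) : ℕ :=
  sInf {l : ℕ | ∃ w : List ℤ,
    (∀ x ∈ w, 1 ≤ x ∧ x ≤ (n : ℤ)) ∧ (w.map (affS n)).prod = π ∧ w.length = l}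

/-- The set of inversions of `π`, up to the diagonal translation relation. -/
def InvPair (π : Equiv.Perm ℤ) : Type :=
  {p : ℤ × ℤ // p.1 < p.2 ∧ π p.2 < π p.1}

/-- The number of equivalence classes of inversions of `π` under
`(a,b) ~ (a + mn, b + mn)`. -/
noncomputable def invLength (n : ℕ) (π : Equiv.Perm ℤ) : ℕ :=
  Nat.card (Quot fun p q : InvPair π =>
    ∃ m : ℤ, q.1.1 = p.1.1 + m * n ∧ q.1.2 = p.1.2 + m * n)

/-- Entry `c_i` of the code of an affine permutation. -/
noncomputable def codeEntry (π : Equiv.Perm ℤ) (i : ℤ) : ℕ :=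
  Nat.card {j : ℤ // i < j ∧ π j < π i}

/-- Entry `ĉ_i` of the involution code of an affine involution. -/
noncomputable def icodeEntry (z : Equiv.Perm ℤ) (i : ℤ) : ℕ :=
  Nat.card {j : ℤ // i < j ∧ z j < z i ∧ z j ≤ i}

/-- `ℓ'(z)`: `n` minus the number of orbits of `z` acting on `ℤ/nℤ`. -/
noncomputable def lprime (n : ℕ) (z : Equiv.Perm ℤ) : ℕ :=
  n - Nat.card (Quot fun a b : ZMod n => ((z (a.val : ℤ) : ℤ) : ZMod n) = b)

/-- The characterizing properties of the Demazure (0-Hecke) product on `S̃_n`: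
closure, associativity, `s_i ∘ s_i = s_i`, and agreement with the group product
on length-additive factorizations. -/
def IsDemazure (n : ℕ) (D : Equiv.Perm ℤ → Equiv.Perm ℤ → Equiv.Perm ℤ) : Prop :=
  (∀ a b, IsAffine n a → IsAffine n b → IsAffine n (D a b)) ∧
  (∀ a b c, IsAffine n a → IsAffine n b → IsAffine n c →
    D (D a b) c = D a (D b c)) ∧
  (∀ i : ℤ, D (affS n i) (affS n i) = affS n i) ∧
  (∀ a b, IsAffine n a → IsAffine n b →
    wordLength n (a * b) = wordLength n a + wordLength n b → D a b = a * b)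

/-- The set of Hecke atoms `{π : π⁻¹ ∘ π = z}`. -/
def AHecke (n : ℕ) (D : Equiv.Perm ℤ → Equiv.Perm ℤ → Equiv.Perm ℤ)
    (z : Equiv.Perm ℤ) : Set (Equiv.Perm ℤ) :=
  {π | IsAffine n π ∧ D π⁻¹ π = z}

/-- The set of atoms: minimal-length Hecke atoms. -/
def DemAtoms (n : ℕ) (D : Equiv.Perm ℤ → Equiv.Perm ℤ → Equiv.Perm ℤ)
    (z : Equiv.Perm ℤ) : Set (Equiv.Perm ℤ) :=
  {π | π ∈ AHecke n D z ∧ ∀ σ ∈ AHecke n D z, wordLength n π ≤ wordLength n σ}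

/-- The Bruhat covering relation on `S̃_n`. -/
def BruhatCov (n : ℕ) (a b : Equiv.Perm ℤ) : Prop :=
  (∃ i j : ℤ, i < j ∧ (j - i) % (n : ℤ) ≠ 0 ∧ b = a * affT n i j) ∧
  wordLength n b = wordLength n a + 1

/-- The Bruhat order on `S̃_n`. -/
def BruhatLE (n : ℕ) : Equiv.Perm ℤ → Equiv.Perm ℤ → Prop :=
  Relation.ReflTransGen (BruhatCov n)

/-- The covering relation of the Bruhat order restricted to involutions in `S̃_n`. -/
def BruhatCovI (n : ℕ) (y z : Equiv.Perm ℤ) : Prop :=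
  IsAffine n y ∧ IsAffine n z ∧ y⁻¹ = y ∧ z⁻¹ = z ∧
  BruhatLE n y z ∧ y ≠ z ∧
  ∀ w : Equiv.Perm ℤ, IsAffine n w → w⁻¹ = w →
    BruhatLE n y w → BruhatLE n w z → w = y ∨ w = z

/-- Strict dominance order on partitions (written as weakly decreasing functions). -/
def DomLT (p q : ℕ → ℕ) : Prop :=
  p ≠ q ∧ ∀ k : ℕ, ∑ i ∈ Finset.range k, p i ≤ ∑ i ∈ Finset.range k, q i

/-- The shape `λ(π)`: the transpose of the partition sorting the code of `π⁻¹`,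
recorded as the weakly decreasing function `k ↦ λ(π)_{k+1}`. -/
noncomputable def affShape (n : ℕ) (π : Equiv.Perm ℤ) : ℕ → ℕ :=
  fun k => Multiset.countP (fun x => k < x)
    ((Finset.Icc (1 : ℤ) (n : ℤ)).val.map (codeEntry π⁻¹))

/-- The shape `μ(z)`: the transpose of the partition sorting the involution code of `z`,
recorded as the weakly decreasing function `k ↦ μ(z)_{k+1}`. -/
noncomputable def invShape (n : ℕ) (z : Equiv.Perm ℤ) : ℕ → ℕ :=
  fun k => Multiset.countP (fun x => k < x)
    ((Finset.Icc (1 : ℤ) (n : ℤ)).val.map (icodeEntry z))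

/-- The weakly decreasing rearrangement of a multiset of naturals, padded by zeros. -/
noncomputable def rearr (s : Multiset ℕ) : ℕ → ℕ :=
  fun k => ((s.sort (· ≤ ·)).reverse).getD k 0

/-- Remove the entries of a list of integers that repeat an earlier residue mod `n`. -/
def dedupMod (n : ℕ) : List ℤ → List ℤ
  | [] => []
  | x :: xs => x :: dedupMod n (xs.filter fun y => (y - x) % (n : ℤ) ≠ 0)
termination_by l => l.length
decreasing_by
  simp only [List.length_cons]
  first
  | exact Nat.lt_succ_of_le (List.length_filter_le _ _)
  | exact Nat.lt_succ_of_le (by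
      rw [List.length_unattach]; exact (List.length_filter_le _ _).trans_eq List.length_attach)
  | exact Nat.lt_succ_of_le (by simpa using List.length_filter_le _ xs.attach)

/-- The window `[[z(a₁), a₁, z(a₂), a₂, …]]` of `α_min(z)⁻¹`, where `a₁ < a₂ < ⋯`
are the elements `a ∈ [n]` with `a ≤ z(a)`. -/
noncomputable def aminWindow (n : ℕ) (z : Equiv.Perm ℤ) : List ℤ :=
  dedupMod n
    ((((Finset.Icc (1 : ℤ) (n : ℤ)).sort (· ≤ ·)).filter fun a => a ≤ z a).flatMap
      fun a => [z a, a])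

/-- Cyclically decreasing elements of `S̃_n`. -/
def IsCycDec (n : ℕ) (π : Equiv.Perm ℤ) : Prop :=
  ∃ w : List ℤ,
    (∀ x ∈ w, 1 ≤ x ∧ x ≤ (n : ℤ)) ∧ (w.map (affS n)).prod = π ∧
    w.length = wordLength n π ∧
    w.Pairwise fun a b => (a + 1 - b) % (n : ℤ) ≠ 0

/-- The coefficient of the monomial `∏ₖ xₖ₊₁^(α k)` in Lam's affine Stanley symmetric
function `F_π`: the number of length-additive factorizations of `π` into cyclically
decreasing factors of lengths prescribed by `α`. -/
noncomputable def stanleyCoeff (n : ℕ) (π : Equiv.Perm ℤ) (α : ℕ →₀ ℕ) : ℕ :=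
  Nat.card {f : ℕ → Equiv.Perm ℤ //
    (∀ k, IsCycDec n (f k)) ∧ (∀ k, wordLength n (f k) = α k) ∧
    (∑ k ∈ α.support, α k) = wordLength n π ∧
    ∃ N : ℕ, (∀ k, N ≤ k → f k = 1) ∧ ((List.range N).map f).prod = π}

/-- The set `Φ⁻_r(y)` of Bruhat covers of `y` of the form `τⁿ_{i r}(y)` with `i < r`
and `i ∉ {r, y(r)} + nℤ`. -/
def PhiMinus (n : ℕ) (τ : ℤ → ℤ → Equiv.Perm ℤ → Equiv.Perm ℤ)
    (y : Equiv.Perm ℤ) (r : ℤ) : Set (Equiv.Perm ℤ) :=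
  {z | BruhatCovI n y z ∧ ∃ i : ℤ, i < r ∧ (i - r) % (n : ℤ) ≠ 0 ∧
    (i - y r) % (n : ℤ) ≠ 0 ∧ z = τ i r y}

/-- The set `Φ⁺_r(y)` of Bruhat covers of `y` of the form `τⁿ_{r j}(y)` with `r < j`
and `j ∉ {r, y(r)} + nℤ`. -/
def PhiPlus (n : ℕ) (τ : ℤ → ℤ → Equiv.Perm ℤ → Equiv.Perm ℤ)
    (y : Equiv.Perm ℤ) (r : ℤ) : Set (Equiv.Perm ℤ) :=
  {z | BruhatCovI n y z ∧ ∃ j : ℤ, r < j ∧ (j - r) % (n : ℤ) ≠ 0 ∧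
    (j - y r) % (n : ℤ) ≠ 0 ∧ z = τ r j y}

/-- The affine symmetric group as a subtype of `Equiv.Perm ℤ`. -/
abbrev AffPerm (n : ℕ) := {π : Equiv.Perm ℤ // IsAffine n π}

/-- The coproduct `Δ(π) = Σ_{π ≐ π'π''} π' ⊗ π''` on `ℚ S̃_n`. -/
noncomputable def affComul (n : ℕ) :
    (AffPerm n →₀ ℚ) →ₗ[ℚ] TensorProduct ℚ (AffPerm n →₀ ℚ) (AffPerm n →₀ ℚ) :=
  Finsupp.lift _ ℚ _ fun π : AffPerm n =>
    ∑ᶠ p ∈ {p : AffPerm n × AffPerm n |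
        p.1.val * p.2.val = π.val ∧
        wordLength n π.val = wordLength n p.1.val + wordLength n p.2.val},
      (Finsupp.single p.1 (1 : ℚ)) ⊗ₜ[ℚ] (Finsupp.single p.2 (1 : ℚ))

/-!
Lengths are computed by Shi's formula `ℓ(π) = ∑ |⌊(π l - π k) / n⌋|`, the sum running over the
pairs `k < l` of a window of `n` consecutive integers. It does not depend on the window, and on
the window starting at `i` it shows that `ℓ(π s_i) = ℓ(π) ± 1` according as `π i < π (i + 1)` or
not. Writing `c ⋆ s_i` for `c s_i` when this is longer than `c`, and for `c` otherwise, the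
Demazure product is defined by `a ∘ b = (a ∘ b s_i) ⋆ s_i` for a right descent `i` of `b`. All
descents give the same result: two of them either commute or are adjacent, and the operators
`⋆ s_i` satisfy the commutation and braid relations of the `s_i`. Associativity, `s_i ∘ s_i = s_i`
and `a ∘ b = a b` for length-additive pairs follow by induction on `ℓ(b)`, and the same induction
shows that every product with these three properties obeys the recursion, whence uniqueness.

Applied to the reversed product `(b⁻¹ ∘ a⁻¹)⁻¹` this gives `s_i ∘ c = (c⁻¹ ⋆ s_i)⁻¹`, so for an
involution `z` with `z i < z (i + 1)` we get `s_i ∘ z ∘ s_i = ((s_i z) ⋆ s_i)⁻¹`. Finally `s_i`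
keeps `z i < z (i + 1)` in order unless `z i ≡ i` and `z (i + 1) = z i + 1`, which for an affine
involution forces `z i = i` and `z (i + 1) = i + 1`.
-/

open Finset Function

section Periodic

variable {n : ℕ} {π σ : Equiv.Perm ℤ}

theorem emod_sub_eq_zero_iff {a b : ℤ} : (a - b) % (n : ℤ) = 0 ↔ (a : ZMod n) = b := by
  rw [← Int.dvd_iff_emod_eq_zero, ← ZMod.intCast_eq_intCast_iff_dvd_sub]
  exact eq_comm

theorem intCast_eq_intCast_iff_of_lt {x y : ℤ} (h₁ : x < y + n) (h₂ : y < x + n) :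
    (x : ZMod n) = y ↔ x = y := by
  refine ⟨fun h => ?_, fun h => h ▸ rfl⟩
  have := Int.eq_zero_of_abs_lt_dvd ((ZMod.intCast_eq_intCast_iff_dvd_sub x y n).1 h)
    (abs_lt.2 ⟨by omega, by omega⟩)
  omega

theorem apply_add_mul_of_periodic (hπ : ∀ x, π (x + n) = π x + n) (x m : ℤ) :
    π (x + m * n) = π x + m * n := by
  have hf : Periodic (fun x => π x - x) n := fun x => by simp only [hπ]; ring
  have := hf.int_mul m x
  simp only [Int.cast_id] at this
  linarith

theorem inv_apply_add_of_periodic (hπ : ∀ x, π (x + n) = π x + n) (x : ℤ) :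
    π⁻¹ (x + n) = π⁻¹ x + n :=
  π.injective (by simp [hπ])

theorem apply_sub_apply_of_intCast_eq (hπ : ∀ x, π (x + n) = π x + n) {k l : ℤ}
    (h : (k : ZMod n) = l) : π l - π k = l - k := by
  obtain ⟨m, hm⟩ := (ZMod.intCast_eq_intCast_iff_dvd_sub k l n).1 h
  obtain rfl : l = k + m * n := by linarith
  rw [apply_add_mul_of_periodic hπ]
  ring

theorem intCast_apply_eq_iff (hπ : ∀ x, π (x + n) = π x + n) {k l : ℤ} :
    (π k : ZMod n) = π l ↔ (k : ZMod n) = l := by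
  rw [← sub_eq_zero, ← Int.cast_sub, ← sub_eq_zero (a := (k : ZMod n)), ← Int.cast_sub]
  refine ⟨fun h => ?_, fun h => ?_⟩
  · have := apply_sub_apply_of_intCast_eq (inv_apply_add_of_periodic hπ)
      (by rwa [← sub_eq_zero, ← Int.cast_sub])
    simp only [Equiv.Perm.coe_inv, Equiv.symm_apply_apply] at this
    rwa [show k - l = π k - π l by linarith]
  · have := apply_sub_apply_of_intCast_eq hπ (by rwa [← sub_eq_zero, ← Int.cast_sub])
    rwa [show π k - π l = k - l by linarith]

theorem apply_add_one_sub_apply_congr (hπ : ∀ x, π (x + n) = π x + n) {i j : ℤ}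
    (h : (i : ZMod n) = j) : π (j + 1) - π j = π (i + 1) - π i := by
  have h1 := apply_sub_apply_of_intCast_eq hπ h
  have h2 := apply_sub_apply_of_intCast_eq hπ (k := i + 1) (l := j + 1) (by push_cast; rw [h])
  linarith

theorem apply_eq_self_of_intCast_eq (hπ : ∀ x, π (x + n) = π x + n) (hinv : π⁻¹ = π) {x : ℤ}
    (h : (π x : ZMod n) = x) : π x = x := by
  have h₁ := apply_sub_apply_of_intCast_eq hπ h.symm
  have h₂ : π⁻¹ (π x) = x := by simp
  rw [hinv] at h₂
  omega

theorem Function.Periodic.apply_cast_intCast {α : Type*} {f : ℤ → α} (hf : Periodic f n)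
    (x : ℤ) :
    f (ZMod.cast (x : ZMod n)) = f x := by
  rw [ZMod.coe_intCast, Int.emod_def, mul_comm]
  simpa using hf.sub_int_mul_eq (x / n) (x := x)

theorem sum_Icc_intCast {M : Type*} [AddCommMonoid M] [NeZero n] (g : ZMod n → M) :
    ∑ k ∈ Icc (1 : ℤ) n, g k = ∑ r, g r := by
  have hinj : Set.InjOn (fun k : ℤ => (k : ZMod n)) (Icc (1 : ℤ) n) := by
    intro k hk l hl h
    simp only [coe_Icc, Set.mem_Icc] at hk hl
    exact (intCast_eq_intCast_iff_of_lt (by omega) (by omega)).1 h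
  have himage : (Icc (1 : ℤ) n).image (fun k : ℤ => (k : ZMod n)) = univ :=
    eq_univ_of_card _ (by rw [card_image_of_injOn hinj, Int.card_Icc, ZMod.card]; omega)
  rw [← sum_image (f := g) hinj, himage]

theorem Function.Periodic.sum_Icc {M : Type*} [AddCommMonoid M] [NeZero n] {f : ℤ → M}
    (hf : Periodic f n) :
    ∑ k ∈ Icc (1 : ℤ) n, f k = ∑ r : ZMod n, f (ZMod.cast r) := by
  rw [← sum_Icc_intCast]
  exact sum_congr rfl fun x _ => (hf.apply_cast_intCast x).symm

theorem sum_Icc_comp_of_periodic {M : Type*} [AddCommMonoid M] [NeZero n]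
    (hσ : ∀ x, σ (x + n) = σ x + n) {f : ℤ → M} (hf : Periodic f n) : ∑ k ∈ Icc (1 : ℤ) n, f (σ k) = ∑ k ∈ Icc (1 : ℤ) n, f k := by
  have hfσ : Periodic (f ∘ σ) n := fun x => by simp only [comp_apply, hσ, hf (σ x)]
  let σ' : ZMod n → ZMod n := fun r => (σ (ZMod.cast r) : ZMod n)
  have hσ' : Bijective σ' := Finite.injective_iff_bijective.1 fun r r' h => by
    simpa only [ZMod.intCast_zmod_cast] using (intCast_apply_eq_iff hσ).1 h
  rw [show ∑ k ∈ Icc (1 : ℤ) n, f (σ k) = ∑ k ∈ Icc (1 : ℤ) n, (f ∘ σ) k from rfl,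
    hfσ.sum_Icc, hf.sum_Icc, ← hσ'.sum_comp (fun r => f (ZMod.cast r))]
  exact sum_congr rfl fun r _ => (hf.apply_cast_intCast _).symm

end Periodic

section Affine

variable {n : ℕ} {π σ : Equiv.Perm ℤ}

theorem isAffine_iff_sum_sub :
    IsAffine n π ↔ (∀ x, π (x + n) = π x + n) ∧ ∑ k ∈ Icc (1 : ℤ) n, (π k - k) = 0 := by
  rw [IsAffine, sum_sub_distrib, sub_eq_zero]

theorem isAffine_one : IsAffine n 1 := ⟨fun _ => rfl, rfl⟩

theorem IsAffine.mul (hπ : IsAffine n π) (hσ : IsAffine n σ) : IsAffine n (π * σ) := by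
  obtain rfl | hn := n.eq_zero_or_pos
  · simp [IsAffine]
  have : NeZero n := ⟨hn.ne'⟩
  rw [isAffine_iff_sum_sub] at *
  refine ⟨fun x => by simp [hσ.1, hπ.1], ?_⟩
  have hf : Periodic (fun x => π x - x) n := fun x => by simp only [hπ.1]; ring
  have hcomp := sum_Icc_comp_of_periodic hσ.1 hf
  calc ∑ k ∈ Icc (1 : ℤ) n, ((π * σ) k - k)
      = ∑ k ∈ Icc (1 : ℤ) n, (π (σ k) - σ k) + ∑ k ∈ Icc (1 : ℤ) n, (σ k - k) := by
        rw [← sum_add_distrib]; simp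
    _ = 0 := by rw [hcomp, hπ.2, hσ.2, add_zero]

theorem IsAffine.inv (hπ : IsAffine n π) : IsAffine n π⁻¹ := by
  obtain rfl | hn := n.eq_zero_or_pos
  · simp [IsAffine]
  have : NeZero n := ⟨hn.ne'⟩
  rw [isAffine_iff_sum_sub] at *
  refine ⟨inv_apply_add_of_periodic hπ.1, ?_⟩
  have hf : Periodic (fun x => π⁻¹ x - x) n := fun x => by
    simp only [inv_apply_add_of_periodic hπ.1]; ring
  have hcomp := sum_Icc_comp_of_periodic hπ.1 hf
  simp only [Equiv.Perm.coe_inv, Equiv.symm_apply_apply] at hcomp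
  rw [Equiv.Perm.coe_inv, ← hcomp, ← neg_eq_zero, ← sum_neg_distrib]
  simpa using hπ.2

theorem IsAffine.eq_one_of_forall_lt (hn : 0 < n) (hπ : IsAffine n π)
    (h : ∀ i, π i < π (i + 1)) : π = 1 := by
  have hmono : StrictMono π := strictMono_int_of_lt_succ h
  -- a strictly increasing surjection of `ℤ` cannot skip a value
  have hstep : Periodic (fun x => π x - x) 1 := by
    intro x
    by_contra hne
    simp only at hne
    have hlt : π x + 1 < π (x + 1) := by have := h x; omega
    obtain ⟨y, hy⟩ := π.surjective (π x + 1)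
    have h1 : x < y := hmono.lt_iff_lt.1 (by omega)
    have h2 : y < x + 1 := hmono.lt_iff_lt.1 (by omega)
    omega
  have hconst : ∀ x, π x = x + π 0 := fun x => by
    have := hstep.int_mul x 0
    simp only [Int.cast_id, mul_one, zero_add] at this
    omega
  have hsum := (isAffine_iff_sum_sub.1 hπ).2
  simp only [fun k => show π k - k = π 0 by have := hconst k; omega, sum_const,
    Int.card_Icc] at hsum
  ext x
  rw [hconst x, Equiv.Perm.one_apply, add_eq_left]
  rcases mul_eq_zero.1 hsum with h0 | h0 <;> omega

theorem eq_one_of_isAffine_one (hπ : IsAffine 1 π) : π = 1 := by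
  refine hπ.eq_one_of_forall_lt one_pos fun i => ?_
  have := hπ.1 i
  simp only [Nat.cast_one] at this
  omega

end Affine

def affineSubgroup (n : ℕ) : Subgroup (Equiv.Perm ℤ) where
  carrier := {π | IsAffine n π}
  mul_mem' := IsAffine.mul
  one_mem' := isAffine_one
  inv_mem' := IsAffine.inv

@[simp] theorem mem_affineSubgroup {n : ℕ} {π : Equiv.Perm ℤ} :
    π ∈ affineSubgroup n ↔ IsAffine n π :=
  Iff.rfl

namespace AffPerm

variable {n : ℕ}

instance : Group (AffPerm n) := (affineSubgroup n).toGroup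

@[simp] theorem val_mul (a b : AffPerm n) : (a * b).val = a.val * b.val := rfl

@[simp] theorem val_inv (a : AffPerm n) : a⁻¹.val = a.val⁻¹ := rfl

@[simp] theorem val_one : (1 : AffPerm n).val = 1 := rfl

theorem apply_add_one_lt_or_lt (c : AffPerm n) (i : ℤ) :
    c.val (i + 1) < c.val i ∨ c.val i < c.val (i + 1) :=
  lt_or_gt_of_ne (c.val.injective.ne (by omega))

theorem descent_congr (c : AffPerm n) {i j : ℤ} (h : (i : ZMod n) = j)
    (hi : c.val (i + 1) < c.val i) : c.val (j + 1) < c.val j := by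
  linarith [apply_add_one_sub_apply_congr c.2.1 h]

theorem two_ne_zero_of_descents {b : AffPerm n} {p : ℤ} (hp : b.val (p + 1) < b.val p)
    (hp1 : b.val (p + 1 + 1) < b.val (p + 1)) : (2 : ZMod n) ≠ 0 := fun h2 => by
  have := apply_sub_apply_of_intCast_eq b.2.1 (k := p) (l := p + 1 + 1)
    (by push_cast; rw [add_assoc, one_add_one_eq_two, h2, add_zero])
  omega

instance : Subsingleton (AffPerm 1) :=
  ⟨fun a b => Subtype.ext <| (eq_one_of_isAffine_one a.2).trans (eq_one_of_isAffine_one b.2).symm⟩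

end AffPerm

/-! ### Simple reflections -/

section SimpleReflection

variable {n : ℕ}

@[simp] theorem affS_mul_self (i : ℤ) : affS n i * affS n i = 1 := by
  ext k
  rw [Equiv.Perm.mul_apply, affS, affT]
  split_ifs with h
  · rfl
  · exact affTFun_involutive h k

@[simp] theorem affS_inv (i : ℤ) : (affS n i)⁻¹ = affS n i :=
  inv_eq_of_mul_eq_one_right (affS_mul_self i)

variable [Fact (1 < n)]

theorem affS_apply (i k : ℤ) :
    affS n i k = if (k : ZMod n) = i then k + 1 else if (k : ZMod n) = i + 1 then k - 1 else k := by
  have h1 : ¬ (i + 1 - i) % (n : ℤ) = 0 := by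
    rw [emod_sub_eq_zero_iff]; push_cast; simp
  rw [affS, affT, dif_neg h1]
  show affTFun n i (i + 1) k = _
  simp only [affTFun, emod_sub_eq_zero_iff]
  push_cast
  split_ifs <;> ring

theorem affS_apply_of_eq {i k : ℤ} (h : (k : ZMod n) = i) : affS n i k = k + 1 := by
  simp [affS_apply, h]

theorem affS_apply_of_eq_add_one {i k : ℤ} (h : (k : ZMod n) = i + 1) : affS n i k = k - 1 := by
  simp [affS_apply, h]

theorem affS_apply_of_ne {i k : ℤ} (h₀ : (k : ZMod n) ≠ i) (h₁ : (k : ZMod n) ≠ i + 1) :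
    affS n i k = k := by
  simp [affS_apply, h₀, h₁]

@[simp] theorem affS_apply_self (i : ℤ) : affS n i i = i + 1 := affS_apply_of_eq rfl

@[simp] theorem affS_apply_add_one (i : ℤ) : affS n i (i + 1) = i := by
  rw [affS_apply_of_eq_add_one (by push_cast; rfl)]; ring

theorem affS_congr {i j : ℤ} (h : (i : ZMod n) = j) : affS n i = affS n j := by
  ext k; simp [affS_apply, h]

theorem affS_comm {p q : ℤ} (h₀ : (q : ZMod n) ≠ p) (h₁ : (q : ZMod n) ≠ p + 1)
    (h₂ : (p : ZMod n) ≠ q + 1) : affS n p * affS n q = affS n q * affS n p := by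
  ext k
  simp only [Equiv.Perm.mul_apply, affS_apply]
  push_cast
  split_ifs <;> grind

theorem affS_braid (h2 : (2 : ZMod n) ≠ 0) (p : ℤ) :
    affS n p * affS n (p + 1) * affS n p = affS n (p + 1) * affS n p * affS n (p + 1) := by
  have h21 : (2 : ZMod n) ≠ 1 := fun h => one_ne_zero (by linear_combination h)
  have h3 : (2 : ZMod n) - 1 = 1 := by ring
  ext k
  simp only [Equiv.Perm.mul_apply, affS_apply]
  push_cast
  by_cases hp : (k : ZMod n) = p
  · simp [hp, add_assoc, one_add_one_eq_two, h2, h21]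
  by_cases hp1 : (k : ZMod n) = p + 1
  · simp [hp1, add_assoc, one_add_one_eq_two, h2, h21]
  by_cases hp2 : (k : ZMod n) = p + 2
  · simp [hp2, add_assoc, one_add_one_eq_two, h2, h21, add_sub_assoc, h3]
  · simp [hp, hp1, hp2, add_assoc, one_add_one_eq_two]

theorem affS_apply_of_distant {p q : ℤ} (h₀ : (q : ZMod n) ≠ p) (h₁ : (q : ZMod n) ≠ p + 1)
    (h₂ : (p : ZMod n) ≠ q + 1) : affS n p q = q ∧ affS n p (q + 1) = q + 1 := by
  constructor <;> apply affS_apply_of_ne <;> push_cast <;> grind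

theorem affS_apply_add_two (h2 : (2 : ZMod n) ≠ 0) (p : ℤ) : affS n p (p + 2) = p + 2 := by
  have h21 : (2 : ZMod n) ≠ 1 := fun h => one_ne_zero (by linear_combination h)
  apply affS_apply_of_ne <;> push_cast <;> simp [h2, h21]

theorem affS_add_one_apply (h2 : (2 : ZMod n) ≠ 0) (p : ℤ) : affS n (p + 1) p = p := by
  apply affS_apply_of_ne <;> push_cast <;> simp [add_assoc, one_add_one_eq_two, h2]

theorem affS_apply_lt_affS_apply {i a b : ℤ} (hab : a < b)
    (h : ¬ (b = a + 1 ∧ (a : ZMod n) = i)) : affS n i a < affS n i b := by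
  rcases eq_or_ne b (a + 1) with rfl | hb
  · have ha : (a : ZMod n) ≠ i := fun ha => h ⟨rfl, ha⟩
    have h₁ : affS n i a ≤ a := by rw [affS_apply, if_neg ha]; split_ifs <;> omega
    have h₂ : a + 1 ≤ affS n i (a + 1) := by
      rw [affS_apply]
      split_ifs with h₃ h₄
      · omega
      · push_cast at h₄
        exact absurd (add_right_cancel h₄) ha
      · omega
    omega
  · -- `s_i` moves every integer by at most one and is injective
    have hbound : ∀ x, x - 1 ≤ affS n i x ∧ affS n i x ≤ x + 1 := fun x => by
      rw [affS_apply]; split_ifs <;> omega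
    have hne := (affS n i).injective.ne hab.ne
    have := hbound a
    have := hbound b
    omega

theorem isAffine_affS (i : ℤ) : IsAffine n (affS n i) := by
  have : NeZero n := ⟨by have := (Fact.out : 1 < n); omega⟩
  refine isAffine_iff_sum_sub.2 ⟨fun x => ?_, ?_⟩
  · simp only [affS_apply]; push_cast; simp only [ZMod.natCast_self, add_zero]; split_ifs <;> ring
  · have hdiff : ∀ k : ℤ, affS n i k - k
        = (if (k : ZMod n) = i then 1 else 0) - (if (k : ZMod n) = i + 1 then 1 else 0) := by
      intro k
      by_cases h₀ : (k : ZMod n) = i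
      · simp [affS_apply_of_eq h₀, h₀]
      by_cases h₁ : (k : ZMod n) = i + 1
      · simp [affS_apply_of_eq_add_one h₁, h₁]
      · simp [affS_apply_of_ne h₀ h₁, h₀, h₁]
    simp only [hdiff, sum_sub_distrib,
      sum_Icc_intCast (fun r : ZMod n => if r = i then (1 : ℤ) else 0),
      sum_Icc_intCast (fun r : ZMod n => if r = i + 1 then (1 : ℤ) else 0), sum_ite_eq', mem_univ,
      if_true, sub_self]

end SimpleReflection

/-! ### Shi's length formula -/

section WindowLength

variable {n : ℕ} {π : Equiv.Perm ℤ}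

theorem not_dvd_apply_sub_apply (hπ : ∀ x, π (x + n) = π x + n) {k l : ℤ} (hkl : k < l)
    (hlk : l < k + n) : ¬ (n : ℤ) ∣ π l - π k := by
  rw [← ZMod.intCast_eq_intCast_iff_dvd_sub, intCast_apply_eq_iff hπ,
    intCast_eq_intCast_iff_of_lt (by omega) (by omega)]
  exact hkl.ne

theorem neg_ediv_natCast_of_not_dvd (hn : 0 < n) {d : ℤ} (h : ¬ (n : ℤ) ∣ d) :
    -d / n = -(d / n) - 1 := by
  rw [Int.neg_ediv, if_neg h, Int.sign_natCast_of_ne_zero hn.ne']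

noncomputable def windowPairs (n : ℕ) (a : ℤ) : Finset (ℤ × ℤ) :=
  (Ico a (a + n) ×ˢ Ico a (a + n)).filter fun p => p.1 < p.2

theorem mem_windowPairs {a : ℤ} {p : ℤ × ℤ} :
    p ∈ windowPairs n a ↔ a ≤ p.1 ∧ p.1 < p.2 ∧ p.2 < a + n := by
  simp only [windowPairs, mem_filter, mem_product, mem_Ico]
  omega

/-- Shi's formula for the Coxeter length of an affine permutation, evaluated on the window
`[a, a + n)`. -/
noncomputable def windowLength (n : ℕ) (π : Equiv.Perm ℤ) (a : ℤ) : ℕ :=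
  ∑ p ∈ windowPairs n a, ((π p.2 - π p.1) / n).natAbs

theorem windowLength_one (a : ℤ) : windowLength n 1 a = 0 :=
  sum_eq_zero fun p hp => by
    rw [mem_windowPairs] at hp
    simp [Int.ediv_eq_zero_of_lt (by omega : 0 ≤ p.2 - p.1) (by omega : p.2 - p.1 < n)]

theorem windowLength_add_one (hn : 0 < n) (hπ : ∀ x, π (x + n) = π x + n) (a : ℤ) :
    windowLength n π (a + 1) = windowLength n π a := by
  -- trade each pair `(a, l)` for `(l, a + n)`; their terms agree because `n ∤ π l - π a`
  refine (sum_nbij' (fun p => if p.1 = a then (p.2, a + n) else p)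
    (fun p => if p.2 = a + n then (a, p.1) else p) ?_ ?_ ?_ ?_ ?_).symm
  · intro p hp
    rw [mem_windowPairs] at hp
    split_ifs <;> rw [mem_windowPairs] <;> omega
  · intro p hp
    rw [mem_windowPairs] at hp
    split_ifs <;> rw [mem_windowPairs] <;> omega
  · intro p hp
    rw [mem_windowPairs] at hp
    split_ifs <;> ext <;> simp_all
  · intro p hp
    rw [mem_windowPairs] at hp
    split_ifs <;> ext <;> simp_all
  · intro p hp
    rw [mem_windowPairs] at hp
    split_ifs with h
    · have hd := not_dvd_apply_sub_apply hπ (k := a) (l := p.2) (by omega) (by omega)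
      rw [hπ, h, show π a + n - π p.2 = -(π p.2 - π a) + 1 * n by ring,
        Int.add_mul_ediv_right _ _ (by omega), neg_ediv_natCast_of_not_dvd hn hd]
      omega
    · rfl

theorem windowLength_eq_windowLength_zero (hn : 0 < n) (hπ : ∀ x, π (x + n) = π x + n) (a : ℤ) :
    windowLength n π a = windowLength n π 0 := by
  induction a using Int.induction_on with
  | zero => rfl
  | succ m ih => rw [windowLength_add_one hn hπ, ih]
  | pred m ih => rw [← ih, ← windowLength_add_one hn hπ, sub_add_cancel]

theorem mul_affS_apply_eq_swap [Fact (1 < n)] {i x : ℤ} (h₁ : i ≤ x) (h₂ : x < i + n) :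
    (π * affS n i) x = π (Equiv.swap i (i + 1) x) := by
  have h1n : 1 < n := Fact.out
  rw [Equiv.Perm.mul_apply]
  congr 1
  rcases eq_or_ne x i with rfl | hi
  · simp
  rcases eq_or_ne x (i + 1) with rfl | hi1
  · simp
  rw [Equiv.swap_apply_of_ne_of_ne hi hi1, affS_apply_of_ne]
  · rwa [Ne, intCast_eq_intCast_iff_of_lt (by omega) (by omega)]
  · rw [Ne, ← Int.cast_one, ← Int.cast_add, intCast_eq_intCast_iff_of_lt (by omega) (by omega)]
    exact hi1

theorem sum_erase_windowPairs_comp_swap {M : Type*} [AddCommMonoid M] (i : ℤ)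
    (g : ℤ × ℤ → M) :
    ∑ p ∈ (windowPairs n i).erase (i, i + 1),
        g (Equiv.swap i (i + 1) p.1, Equiv.swap i (i + 1) p.2) =
      ∑ p ∈ (windowPairs n i).erase (i, i + 1), g p := by
  refine sum_equiv ((Equiv.swap i (i + 1)).prodCongr (Equiv.swap i (i + 1))) (fun p => ?_)
    fun _ _ => rfl
  simp only [mem_erase, ne_eq, Prod.ext_iff, mem_windowPairs, Equiv.prodCongr_apply, Prod.map,
    Equiv.swap_apply_def]
  split_ifs <;> omega

theorem windowLength_mul_affS_self [Fact (1 < n)] (hπ : ∀ x, π (x + n) = π x + n) {i : ℤ}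
    (h : π i < π (i + 1)) : windowLength n (π * affS n i) i = windowLength n π i + 1 := by
  have h1n : 1 < n := Fact.out
  have hmem : (i, i + 1) ∈ windowPairs n i := mem_windowPairs.2 ⟨le_rfl, by omega, by omega⟩
  have hrest : ∑ p ∈ (windowPairs n i).erase (i, i + 1),
      (((π * affS n i) p.2 - (π * affS n i) p.1) / n).natAbs =
        ∑ p ∈ (windowPairs n i).erase (i, i + 1), ((π p.2 - π p.1) / n).natAbs := by
    rw [← sum_erase_windowPairs_comp_swap i fun p => ((π p.2 - π p.1) / n).natAbs]
    refine sum_congr rfl fun p hp => ?_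
    rw [mem_erase, mem_windowPairs] at hp
    rw [mul_affS_apply_eq_swap (by omega) (by omega), mul_affS_apply_eq_swap (by omega) (by omega)]
  have hd := not_dvd_apply_sub_apply hπ (k := i) (l := i + 1) (by omega) (by omega)
  have hspecial : (((π * affS n i) (i + 1) - (π * affS n i) i) / n).natAbs =
      ((π (i + 1) - π i) / n).natAbs + 1 := by
    rw [Equiv.Perm.mul_apply, Equiv.Perm.mul_apply, affS_apply_self, affS_apply_add_one,
      show π i - π (i + 1) = -(π (i + 1) - π i) by ring, neg_ediv_natCast_of_not_dvd (by omega) hd]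
    have := Int.ediv_nonneg (by omega : 0 ≤ π (i + 1) - π i) (by omega : (0 : ℤ) ≤ n)
    omega
  unfold windowLength
  rw [← add_sum_erase _ _ hmem, ← add_sum_erase _ _ hmem, hrest, hspecial]
  ring

end WindowLength

section Length

variable {n : ℕ} [Fact (1 < n)] {π σ : Equiv.Perm ℤ}

theorem exists_mem_Icc_intCast_eq (i : ℤ) : ∃ j : ℤ, (1 ≤ j ∧ j ≤ n) ∧ (j : ZMod n) = i := by
  have hn : (0 : ℤ) < n := by have := (Fact.out : 1 < n); omega
  refine ⟨(i - 1) % n + 1, ⟨?_, ?_⟩, ?_⟩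
  · have := Int.emod_nonneg (i - 1) hn.ne'; omega
  · have := Int.emod_lt_of_pos (i - 1) hn; omega
  · push_cast [ZMod.intCast_mod]; ring

theorem IsAffine.exists_descent (hπ : IsAffine n π) (hne : π ≠ 1) :
    ∃ i : ℤ, (1 ≤ i ∧ i ≤ n) ∧ π (i + 1) < π i := by
  have hn : 0 < n := by have := (Fact.out : 1 < n); omega
  obtain ⟨i, hi⟩ : ∃ i, π (i + 1) < π i := by
    by_contra! h
    exact hne (hπ.eq_one_of_forall_lt hn fun i => (h i).lt_of_ne (π.injective.ne (by omega)))
  obtain ⟨j, hj, hji⟩ := exists_mem_Icc_intCast_eq (n := n) i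
  exact ⟨j, hj, by linarith [apply_add_one_sub_apply_congr hπ.1 hji]⟩

theorem isAffine_affS_prod (w : List ℤ) : IsAffine n (w.map (affS n)).prod :=
  (affineSubgroup n).list_prod_mem (by simpa using fun i _ => isAffine_affS i)

theorem windowLength_mul_affS_of_lt (hπ : IsAffine n π) {i : ℤ} (h : π i < π (i + 1)) :
    windowLength n (π * affS n i) 0 = windowLength n π 0 + 1 := by
  have hn : 0 < n := by have := (Fact.out : 1 < n); omega
  rw [← windowLength_eq_windowLength_zero hn (hπ.mul (isAffine_affS i)).1 i,
    ← windowLength_eq_windowLength_zero hn hπ.1 i]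
  exact windowLength_mul_affS_self hπ.1 h

theorem windowLength_mul_affS_of_gt (hπ : IsAffine n π) {i : ℤ} (h : π (i + 1) < π i) :
    windowLength n (π * affS n i) 0 + 1 = windowLength n π 0 := by
  have := windowLength_mul_affS_of_lt (hπ.mul (isAffine_affS i)) (i := i) (by simpa using h)
  rwa [mul_assoc, affS_mul_self, mul_one, eq_comm] at this

theorem windowLength_mul_affS_le (hπ : IsAffine n π) (i : ℤ) :
    windowLength n (π * affS n i) 0 ≤ windowLength n π 0 + 1 := by
  rcases lt_or_gt_of_ne (π.injective.ne (by omega : i ≠ i + 1)) with h | h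
  · exact (windowLength_mul_affS_of_lt hπ h).le
  · have := windowLength_mul_affS_of_gt hπ h
    omega

theorem windowLength_affS_prod_le (w : List ℤ) :
    windowLength n (w.map (affS n)).prod 0 ≤ w.length := by
  induction w using List.reverseRecOn with
  | nil => simp [windowLength_one]
  | append_singleton w i ih =>
    simp only [List.map_append, List.map_singleton, List.prod_append, List.prod_singleton,
      List.length_append, List.length_singleton]
    exact (windowLength_mul_affS_le (isAffine_affS_prod w) i).trans (by omega)

theorem IsAffine.exists_word (hπ : IsAffine n π) :
    ∃ w : List ℤ, (∀ x ∈ w, 1 ≤ x ∧ x ≤ (n : ℤ)) ∧ (w.map (affS n)).prod = π ∧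
      w.length = windowLength n π 0 := by
  induction h : windowLength n π 0 generalizing π with
  | zero =>
    refine ⟨[], by simp, ?_, rfl⟩
    by_contra hne
    obtain ⟨i, -, hi⟩ := hπ.exists_descent (Ne.symm hne)
    have := windowLength_mul_affS_of_gt hπ hi
    omega
  | succ m ih =>
    have hne : π ≠ 1 := by rintro rfl; simp [windowLength_one] at h
    obtain ⟨i, hi, hdesc⟩ := hπ.exists_descent hne
    obtain ⟨w, hw, hprod, hlen⟩ := ih (hπ.mul (isAffine_affS i))
      (by have := windowLength_mul_affS_of_gt hπ hdesc; omega)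
    refine ⟨w ++ [i], ?_, ?_, by simp [hlen]⟩
    · intro x hx
      rcases List.mem_append.1 hx with hx | hx
      exacts [hw x hx, List.mem_singleton.1 hx ▸ hi]
    · simp [hprod, mul_assoc]

theorem wordLength_eq_windowLength (hπ : IsAffine n π) : wordLength n π = windowLength n π 0 := by
  obtain ⟨w, hw, hprod, hlen⟩ := hπ.exists_word
  refine le_antisymm (Nat.sInf_le ⟨w, hw, hprod, hlen⟩) (le_csInf ⟨_, w, hw, hprod, hlen⟩ ?_)
  rintro _ ⟨v, -, rfl, rfl⟩
  exact windowLength_affS_prod_le v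

theorem wordLength_mul_affS_of_lt (hπ : IsAffine n π) {i : ℤ} (h : π i < π (i + 1)) :
    wordLength n (π * affS n i) = wordLength n π + 1 := by
  rw [wordLength_eq_windowLength (hπ.mul (isAffine_affS i)), wordLength_eq_windowLength hπ,
    windowLength_mul_affS_of_lt hπ h]

theorem wordLength_mul_affS_of_gt (hπ : IsAffine n π) {i : ℤ} (h : π (i + 1) < π i) :
    wordLength n (π * affS n i) + 1 = wordLength n π := by
  rw [wordLength_eq_windowLength (hπ.mul (isAffine_affS i)), wordLength_eq_windowLength hπ,
    windowLength_mul_affS_of_gt hπ h]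

theorem wordLength_one : wordLength n (1 : Equiv.Perm ℤ) = 0 := by
  rw [wordLength_eq_windowLength isAffine_one, windowLength_one]

theorem wordLength_affS (i : ℤ) : wordLength n (affS n i) = 1 := by
  simpa [wordLength_one] using wordLength_mul_affS_of_lt isAffine_one (n := n) (i := i) (by simp)

theorem wordLength_mul_le (hπ : IsAffine n π) (hσ : IsAffine n σ) :
    wordLength n (π * σ) ≤ wordLength n π + wordLength n σ := by
  obtain ⟨v, hv, rfl, hvlen⟩ := hπ.exists_word
  obtain ⟨w, hw, rfl, hwlen⟩ := hσ.exists_word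
  rw [wordLength_eq_windowLength hπ, wordLength_eq_windowLength hσ, ← hvlen, ← hwlen,
    ← List.length_append]
  refine Nat.sInf_le ⟨v ++ w, fun x hx => ?_, by simp, rfl⟩
  rcases List.mem_append.1 hx with hx | hx
  exacts [hv x hx, hw x hx]

theorem wordLength_inv_le (hπ : IsAffine n π) : wordLength n π⁻¹ ≤ wordLength n π := by
  obtain ⟨w, hw, rfl, hlen⟩ := hπ.exists_word
  rw [wordLength_eq_windowLength hπ, ← hlen, ← List.length_reverse]
  refine Nat.sInf_le ⟨w.reverse, fun x hx => hw x (List.mem_reverse.1 hx), ?_, rfl⟩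
  rw [List.prod_inv_reverse, List.map_reverse, List.map_map]
  congr 3
  ext i : 1
  simp

theorem wordLength_inv (hπ : IsAffine n π) : wordLength n π⁻¹ = wordLength n π :=
  le_antisymm (wordLength_inv_le hπ) (by simpa using wordLength_inv_le hπ.inv)

end Length

/-! ### The Demazure product -/

namespace AffPerm

variable {n : ℕ} [Fact (1 < n)]

noncomputable def simple (i : ℤ) : AffPerm n := ⟨affS n i, isAffine_affS i⟩

@[simp] theorem val_simple (i : ℤ) : (simple i : AffPerm n).val = affS n i := rfl

@[simp] theorem simple_mul_self (i : ℤ) : (simple i : AffPerm n) * simple i = 1 :=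
  Subtype.ext (affS_mul_self i)

@[simp] theorem simple_inv (i : ℤ) : (simple i : AffPerm n)⁻¹ = simple i :=
  Subtype.ext (affS_inv i)

theorem simple_congr {i j : ℤ} (h : (i : ZMod n) = j) : (simple i : AffPerm n) = simple j :=
  Subtype.ext (affS_congr h)

theorem simple_comm {p q : ℤ} (h₀ : (q : ZMod n) ≠ p) (h₁ : (q : ZMod n) ≠ p + 1)
    (h₂ : (p : ZMod n) ≠ q + 1) : (simple p : AffPerm n) * simple q = simple q * simple p :=
  Subtype.ext (affS_comm h₀ h₁ h₂)

theorem simple_braid (h2 : (2 : ZMod n) ≠ 0) (p : ℤ) :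
    (simple p : AffPerm n) * simple (p + 1) * simple p =
      simple (p + 1) * simple p * simple (p + 1) :=
  Subtype.ext (affS_braid h2 p)

@[simp] theorem mul_simple_apply (c : AffPerm n) (i x : ℤ) :
    (c * simple i).val x = c.val (affS n i x) := rfl

noncomputable def demazureSimple (c : AffPerm n) (i : ℤ) : AffPerm n :=
  if c.val i < c.val (i + 1) then c * simple i else c

theorem demazureSimple_of_lt {c : AffPerm n} {i : ℤ} (h : c.val i < c.val (i + 1)) :
    demazureSimple c i = c * simple i :=
  if_pos h

theorem demazureSimple_of_gt {c : AffPerm n} {i : ℤ} (h : c.val (i + 1) < c.val i) :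
    demazureSimple c i = c :=
  if_neg h.not_gt

theorem demazureSimple_apply_add_one_lt (c : AffPerm n) (i : ℤ) :
    (demazureSimple c i).val (i + 1) < (demazureSimple c i).val i := by
  rcases c.apply_add_one_lt_or_lt i with h | h
  · rwa [demazureSimple_of_gt h]
  · simpa [demazureSimple_of_lt h] using h

theorem demazureSimple_congr (c : AffPerm n) {i j : ℤ} (h : (i : ZMod n) = j) :
    demazureSimple c i = demazureSimple c j := by
  rcases c.apply_add_one_lt_or_lt i with hi | hi
  · rw [demazureSimple_of_gt hi, demazureSimple_of_gt (c.descent_congr h hi)]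
  · rw [demazureSimple_of_lt hi, simple_congr h, demazureSimple_of_lt]
    have := apply_add_one_sub_apply_congr c.2.1 h
    linarith

theorem demazureSimple_comm (c : AffPerm n) {p q : ℤ} (h₀ : (q : ZMod n) ≠ p)
    (h₁ : (q : ZMod n) ≠ p + 1) (h₂ : (p : ZMod n) ≠ q + 1) :
    demazureSimple (demazureSimple c p) q = demazureSimple (demazureSimple c q) p := by
  have hp := affS_apply_of_distant h₀ h₁ h₂
  have hq := affS_apply_of_distant h₀.symm h₂ h₁
  rcases c.apply_add_one_lt_or_lt p with hcp | hcp <;>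
    rcases c.apply_add_one_lt_or_lt q with hcq | hcq
  · rw [demazureSimple_of_gt hcp, demazureSimple_of_gt hcq, demazureSimple_of_gt hcp]
  · rw [demazureSimple_of_gt hcp, demazureSimple_of_lt hcq,
      demazureSimple_of_gt (by simpa [hq] using hcp)]
  · rw [demazureSimple_of_lt hcp, demazureSimple_of_gt hcq,
      demazureSimple_of_gt (by simpa [hp] using hcq), demazureSimple_of_lt hcp]
  · rw [demazureSimple_of_lt hcp, demazureSimple_of_lt hcq,
      demazureSimple_of_lt (by simpa [hp] using hcq),
      demazureSimple_of_lt (by simpa [hq] using hcp), mul_assoc, mul_assoc, simple_comm h₀ h₁ h₂]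

theorem demazureSimple_braid (c : AffPerm n) (h2 : (2 : ZMod n) ≠ 0) (p : ℤ) :
    demazureSimple (demazureSimple (demazureSimple c p) (p + 1)) p =
      demazureSimple (demazureSimple (demazureSimple c (p + 1)) p) (p + 1) := by
  have e1 := affS_apply_add_two h2 p
  have e2 := affS_add_one_apply h2 p
  have e3 : affS n (p + 1) (p + 1) = p + 2 := by rw [affS_apply_self]; ring
  have e4 : affS n (p + 1) (p + 2) = p + 1 := by
    rw [show p + 2 = p + 1 + 1 by ring, affS_apply_add_one]
  have hbraid := simple_braid (n := n) h2 p
  have hxy := c.val.injective.ne (show p ≠ p + 1 by omega)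
  have hyz := c.val.injective.ne (show p + 1 ≠ p + 2 by omega)
  have hxz := c.val.injective.ne (show p ≠ p + 2 by omega)
  unfold demazureSimple
  split_ifs <;>
    simp only [mul_simple_apply, affS_apply_self, affS_apply_add_one, e1, e2, e3, e4,
      show p + 1 + 1 = p + 2 by ring] at * <;>
    first | omega | rfl | (simp only [mul_assoc] at hbraid ⊢; rw [hbraid])

theorem wordLength_mul_simple_of_lt {c : AffPerm n} {i : ℤ} (h : c.val i < c.val (i + 1)) :
    wordLength n (c * simple i).val = wordLength n c.val + 1 :=
  wordLength_mul_affS_of_lt c.2 h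

theorem wordLength_mul_simple_of_gt {c : AffPerm n} {i : ℤ} (h : c.val (i + 1) < c.val i) :
    wordLength n (c * simple i).val + 1 = wordLength n c.val :=
  wordLength_mul_affS_of_gt c.2 h

theorem wordLength_mul_simple_lt {c : AffPerm n} {i : ℤ} (h : c.val (i + 1) < c.val i) :
    wordLength n (c * simple i).val < wordLength n c.val := by
  have := wordLength_mul_simple_of_gt h
  omega

theorem eq_one_of_forall_lt {c : AffPerm n} (h : ∀ i, c.val i < c.val (i + 1)) : c = 1 :=
  Subtype.ext (c.2.eq_one_of_forall_lt (by have := (Fact.out : 1 < n); omega) h)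

theorem induction_on_descent {P : AffPerm n → Prop} (one : P 1)
    (step : ∀ c i, c.val (i + 1) < c.val i → P (c * simple i) → P c) (c : AffPerm n) : P c := by
  induction hm : wordLength n c.val using Nat.strong_induction_on generalizing c with
  | _ m ih =>
    by_cases hc : ∃ i, c.val (i + 1) < c.val i
    · obtain ⟨i, hi⟩ := hc
      exact step c i hi (ih _ (hm ▸ wordLength_mul_simple_lt hi) _ rfl)
    · simp only [not_exists, not_lt] at hc
      rw [eq_one_of_forall_lt fun i => (hc i).lt_of_ne (c.val.injective.ne (by omega))]
      exact one

open Classical in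
/-- Recursion on the length of `b`, peeling off an arbitrarily chosen right descent;
`demazure_eq_of_descent` shows that every right descent can be used. -/
noncomputable def demazure (a b : AffPerm n) : AffPerm n :=
  if h : ∃ i, b.val (i + 1) < b.val i then
    demazureSimple (demazure a (b * simple h.choose)) h.choose
  else a
termination_by wordLength n b.val
decreasing_by exact wordLength_mul_simple_lt h.choose_spec

theorem demazure_eq_choose (a : AffPerm n) {b : AffPerm n} (h : ∃ i, b.val (i + 1) < b.val i) :
    demazure a b = demazureSimple (demazure a (b * simple h.choose)) h.choose := by
  rw [demazure, dif_pos h]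

@[simp] theorem demazure_one (a : AffPerm n) : demazure a 1 = a := by
  rw [demazure, dif_neg]
  simp

def DemazurePeels (b : AffPerm n) : Prop :=
  ∀ a i, b.val (i + 1) < b.val i → demazure a b = demazureSimple (demazure a (b * simple i)) i

theorem demazureSimple_demazure_eq_of_distant {b : AffPerm n} {p q : ℤ}
    (hp : b.val (p + 1) < b.val p) (hq : b.val (q + 1) < b.val q) (h₀ : (q : ZMod n) ≠ p)
    (h₁ : (q : ZMod n) ≠ p + 1) (h₂ : (p : ZMod n) ≠ q + 1)
    (hbp : DemazurePeels (b * simple p)) (hbq : DemazurePeels (b * simple q)) (a : AffPerm n) :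
    demazureSimple (demazure a (b * simple p)) p =
      demazureSimple (demazure a (b * simple q)) q := by
  obtain ⟨e₁, e₂⟩ := affS_apply_of_distant h₀ h₁ h₂
  obtain ⟨e₃, e₄⟩ := affS_apply_of_distant h₀.symm h₂ h₁
  rw [hbp a q (by simpa [e₁, e₂] using hq), hbq a p (by simpa [e₃, e₄] using hp), mul_assoc,
    mul_assoc, simple_comm h₀ h₁ h₂]
  exact (demazureSimple_comm _ h₀ h₁ h₂).symm

theorem demazureSimple_demazure_eq_of_adjacent {b : AffPerm n} {p : ℤ}
    (hp : b.val (p + 1) < b.val p) (hp1 : b.val (p + 1 + 1) < b.val (p + 1))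
    (IH : ∀ b' : AffPerm n, wordLength n b'.val < wordLength n b.val → DemazurePeels b')
    (a : AffPerm n) :
    demazureSimple (demazure a (b * simple p)) p =
      demazureSimple (demazure a (b * simple (p + 1))) (p + 1) := by
  have h2 := two_ne_zero_of_descents hp hp1
  have e₁ := affS_apply_add_two h2 p
  have e₂ := affS_add_one_apply h2 p
  have e₃ : p + 1 + 1 = p + 2 := by ring
  have e₄ : affS n (p + 1) (p + 2) = p + 1 := by rw [← e₃, affS_apply_add_one]
  rw [e₃] at hp1
  have hd₁ : (b * simple p).val (p + 1 + 1) < (b * simple p).val (p + 1) := by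
    simpa [e₁, e₃] using hp1.trans hp
  have hd₂ : (b * simple p * simple (p + 1)).val (p + 1) <
      (b * simple p * simple (p + 1)).val p := by
    simpa [e₁, e₂, e₃] using hp1
  have hd₃ : (b * simple (p + 1)).val (p + 1) < (b * simple (p + 1)).val p := by
    simpa [e₂, e₃] using hp1.trans hp
  have hd₄ : (b * simple (p + 1) * simple p).val (p + 1 + 1) <
      (b * simple (p + 1) * simple p).val (p + 1) := by
    simpa [e₁, e₂, e₃, e₄] using hp
  have hlen₁ := wordLength_mul_simple_lt hp
  have hlen₂ := (wordLength_mul_simple_lt hd₁).trans hlen₁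
  have hlen₃ := wordLength_mul_simple_lt (c := b) (i := p + 1) (by rwa [e₃])
  have hlen₄ := (wordLength_mul_simple_lt hd₃).trans hlen₃
  rw [IH _ hlen₁ a _ hd₁, IH _ hlen₂ a _ hd₂, IH _ hlen₃ a _ hd₃, IH _ hlen₄ a _ hd₄, mul_assoc,
    mul_assoc, mul_assoc, mul_assoc, ← mul_assoc (simple p), simple_braid h2, ← mul_assoc,
    ← mul_assoc]
  exact demazureSimple_braid _ h2 p

theorem demazureSimple_demazure_eq {b : AffPerm n} {i j : ℤ} (hi : b.val (i + 1) < b.val i)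
    (hj : b.val (j + 1) < b.val j)
    (IH : ∀ b' : AffPerm n, wordLength n b'.val < wordLength n b.val → DemazurePeels b')
    (a : AffPerm n) :
    demazureSimple (demazure a (b * simple i)) i =
      demazureSimple (demazure a (b * simple j)) j := by
  by_cases h₀ : (j : ZMod n) = i
  · rw [simple_congr h₀, demazureSimple_congr _ h₀]
  by_cases h₁ : (j : ZMod n) = i + 1
  · have h₁' : (j : ZMod n) = (i + 1 : ℤ) := by push_cast; exact h₁
    rw [simple_congr h₁', demazureSimple_congr _ h₁']
    exact demazureSimple_demazure_eq_of_adjacent hi (b.descent_congr h₁' hj) IH a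
  by_cases h₂ : (i : ZMod n) = j + 1
  · have h₂' : (i : ZMod n) = (j + 1 : ℤ) := by push_cast; exact h₂
    rw [simple_congr h₂', demazureSimple_congr _ h₂']
    exact (demazureSimple_demazure_eq_of_adjacent hj (b.descent_congr h₂' hi) IH a).symm
  exact demazureSimple_demazure_eq_of_distant hi hj h₀ h₁ h₂
    (IH _ (wordLength_mul_simple_lt hi)) (IH _ (wordLength_mul_simple_lt hj)) a

theorem demazurePeels (b : AffPerm n) : DemazurePeels b := by
  induction hm : wordLength n b.val using Nat.strong_induction_on generalizing b with
  | _ m ih =>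
    intro a i hi
    have hex : ∃ j, b.val (j + 1) < b.val j := ⟨i, hi⟩
    rw [demazure_eq_choose a hex]
    exact demazureSimple_demazure_eq hex.choose_spec hi (fun b' hb' => ih _ (hm ▸ hb') b' rfl) a

theorem demazure_eq_of_descent (a : AffPerm n) {b : AffPerm n} {i : ℤ}
    (h : b.val (i + 1) < b.val i) :
    demazure a b = demazureSimple (demazure a (b * simple i)) i :=
  demazurePeels b a i h

theorem demazure_demazureSimple (a b : AffPerm n) (i : ℤ) :
    demazure a (demazureSimple b i) = demazureSimple (demazure a b) i := by
  rcases b.apply_add_one_lt_or_lt i with h | h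
  · rw [demazureSimple_of_gt h, demazure_eq_of_descent a h,
      demazureSimple_of_gt (demazureSimple_apply_add_one_lt _ i)]
  · rw [demazureSimple_of_lt h, demazure_eq_of_descent a (i := i) (by simpa using h), mul_assoc,
      simple_mul_self, mul_one]

theorem demazure_assoc (a b c : AffPerm n) :
    demazure (demazure a b) c = demazure a (demazure b c) := by
  induction c using induction_on_descent with
  | one => simp
  | step c i hi ih =>
    rw [demazure_eq_of_descent _ hi, demazure_eq_of_descent b hi, ih, demazure_demazureSimple]

theorem demazure_simple_self (i : ℤ) : demazure (simple i : AffPerm n) (simple i) = simple i := by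
  have h : (simple i : AffPerm n).val (i + 1) < (simple i : AffPerm n).val i := by simp
  rw [demazure_eq_of_descent _ h, simple_mul_self, demazure_one, demazureSimple_of_gt h]

theorem demazure_eq_mul {a b : AffPerm n}
    (h : wordLength n (a.val * b.val) = wordLength n a.val + wordLength n b.val) :
    demazure a b = a * b := by
  induction b using induction_on_descent with
  | one => simp
  | step b i hi ih =>
    have hc : a * b = a * (b * simple i) * simple i := by simp [mul_assoc]
    have hb := wordLength_mul_simple_of_gt hi
    have hle : wordLength n (a * (b * simple i)).val ≤
        wordLength n a.val + wordLength n (b * simple i).val :=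
      wordLength_mul_le a.2 (b * simple i).2
    change wordLength n (a * b).val = _ at h
    change wordLength n (a * (b * simple i)).val = _ → _ at ih
    rcases (a * (b * simple i)).apply_add_one_lt_or_lt i with hd | hd
    · have := wordLength_mul_simple_of_gt hd
      rw [← hc] at this
      omega
    · have := wordLength_mul_simple_of_lt hd
      rw [← hc] at this
      rw [demazure_eq_of_descent a hi, ih (by omega), demazureSimple_of_lt hd, hc]

end AffPerm

/-! ### Uniqueness and conjugation of involutions -/

namespace AffPerm

variable {n : ℕ}

structure IsDemazureProduct (D : AffPerm n → AffPerm n → AffPerm n) : Prop where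
  assoc : ∀ a b c, D (D a b) c = D a (D b c)
  simple_self : ∀ (i : ℤ) (a : AffPerm n), a.val = affS n i → D a a = a
  eq_mul : ∀ a b : AffPerm n,
    wordLength n (a.val * b.val) = wordLength n a.val + wordLength n b.val →
    (D a b).val = a.val * b.val

variable [Fact (1 < n)] {D : AffPerm n → AffPerm n → AffPerm n}

theorem isDemazureProduct_demazure : IsDemazureProduct (demazure (n := n)) where
  assoc := demazure_assoc
  simple_self i a ha := by
    obtain rfl : a = simple i := Subtype.ext ha
    exact demazure_simple_self i
  eq_mul _ _ h := congrArg Subtype.val (demazure_eq_mul h)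

namespace IsDemazureProduct

theorem mul_simple_of_gt (hD : IsDemazureProduct D) {c : AffPerm n} {i : ℤ}
    (h : c.val (i + 1) < c.val i) : D (c * simple i) (simple i) = c :=
  Subtype.ext <| by
    rw [hD.eq_mul _ _ (by
      simpa [wordLength_affS, mul_assoc] using (wordLength_mul_simple_of_gt h).symm)]
    simp [mul_assoc]

theorem apply_simple (hD : IsDemazureProduct D) (c : AffPerm n) (i : ℤ) :
    D c (simple i) = demazureSimple c i := by
  rcases c.apply_add_one_lt_or_lt i with h | h
  · rw [demazureSimple_of_gt h]
    conv_lhs => rw [← hD.mul_simple_of_gt h]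
    rw [hD.assoc, hD.simple_self i _ rfl, hD.mul_simple_of_gt h]
  · rw [demazureSimple_of_lt h]
    exact Subtype.ext
      (hD.eq_mul _ _ (by simpa [wordLength_affS] using wordLength_mul_simple_of_lt h))

theorem apply_of_descent (hD : IsDemazureProduct D) (a : AffPerm n) {b : AffPerm n} {i : ℤ}
    (h : b.val (i + 1) < b.val i) : D a b = demazureSimple (D a (b * simple i)) i := by
  conv_lhs => rw [← hD.mul_simple_of_gt h, ← hD.assoc]
  exact hD.apply_simple _ i

theorem one_right (hD : IsDemazureProduct D) (a : AffPerm n) : D a 1 = a :=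
  Subtype.ext (by simpa using hD.eq_mul a 1 (by simp [wordLength_one]))

theorem unique (hD : IsDemazureProduct D) {D' : AffPerm n → AffPerm n → AffPerm n}
    (hD' : IsDemazureProduct D') : D = D' := by
  funext a b
  induction b using induction_on_descent with
  | one => rw [hD.one_right, hD'.one_right]
  | step b i hi ih => rw [hD.apply_of_descent a hi, hD'.apply_of_descent a hi, ih]

theorem reverse (hD : IsDemazureProduct D) : IsDemazureProduct fun a b => (D b⁻¹ a⁻¹)⁻¹ where
  assoc a b c := by simp [hD.assoc]
  simple_self i a ha := by
    have : a⁻¹ = a := Subtype.ext (by simp [ha])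
    simp [this, hD.simple_self i a ha]
  eq_mul a b h := by
    have := hD.eq_mul b⁻¹ a⁻¹ (by
      rw [val_inv, val_inv, ← mul_inv_rev, wordLength_inv (a.2.mul b.2), wordLength_inv a.2,
        wordLength_inv b.2, h, add_comm])
    simp [this]

theorem simple_apply (hD : IsDemazureProduct D) (i : ℤ) (c : AffPerm n) :
    D (simple i) c = (demazureSimple c⁻¹ i)⁻¹ := by
  simpa using congrArg (·⁻¹) (hD.reverse.apply_simple c⁻¹ i)

theorem simple_apply_apply_simple (hD : IsDemazureProduct D) {z : AffPerm n} (hz : z⁻¹ = z)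
    (i : ℤ) :
    (z.val (i + 1) < z.val i → D (simple i) (D z (simple i)) = z) ∧
    (z.val i = i ∧ z.val (i + 1) = i + 1 →
      (D (simple i) (D z (simple i))).val = z.val * affS n i) ∧
    (¬ z.val (i + 1) < z.val i → ¬ (z.val i = i ∧ z.val (i + 1) = i + 1) →
      (D (simple i) (D z (simple i))).val = affS n i * z.val * affS n i) := by
  have hasc : z.val i < z.val (i + 1) →
      D (simple i) (D z (simple i)) = (demazureSimple (simple i * z) i)⁻¹ := fun h => by
    rw [hD.apply_simple, demazureSimple_of_lt h, hD.simple_apply, mul_inv_rev, simple_inv, hz]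
  refine ⟨fun h => ?_, fun ⟨h₀, h₁⟩ => ?_, fun h₀ h₁ => ?_⟩
  · rw [hD.apply_simple, demazureSimple_of_gt h, hD.simple_apply, hz, demazureSimple_of_gt h, hz]
  · rw [hasc (by omega), demazureSimple_of_gt (by simp [h₀, h₁])]
    simp [hz]
  · have hlt : z.val i < z.val (i + 1) :=
      lt_of_le_of_ne (not_lt.1 h₀) (z.val.injective.ne (by omega))
    have hfix : ¬ (z.val (i + 1) = z.val i + 1 ∧ (z.val i : ZMod n) = i) := fun ⟨h₂, h₃⟩ => by
      have := apply_eq_self_of_intCast_eq z.2.1 (congrArg Subtype.val hz) h₃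
      exact h₁ ⟨this, by omega⟩
    rw [hasc hlt, demazureSimple_of_lt (by simpa using affS_apply_lt_affS_apply hlt hfix)]
    simp [hz, mul_assoc]

end IsDemazureProduct

end AffPerm

/-- there is a unique associative Demazure product on `S̃_n` with
`s_i ∘ s_i = s_i` which agrees with the group product on length-additive pairs;
moreover `s_i ∘ z ∘ s_i` is given by the stated case formula for involutions `z`. -/
theorem demazure_product_exists_unique (n : ℕ) (hn : 0 < n) :
    (∃! D : AffPerm n → AffPerm n → AffPerm n,
      (∀ a b c, D (D a b) c = D a (D b c)) ∧
      (∀ (i : ℤ) (a : AffPerm n), a.val = affS n i → D a a = a) ∧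
      (∀ a b : AffPerm n,
        wordLength n (a.val * b.val) = wordLength n a.val + wordLength n b.val →
        (D a b).val = a.val * b.val)) ∧
    (∀ D : AffPerm n → AffPerm n → AffPerm n,
      ((∀ a b c, D (D a b) c = D a (D b c)) ∧
       (∀ (i : ℤ) (a : AffPerm n), a.val = affS n i → D a a = a) ∧
       (∀ a b : AffPerm n,
         wordLength n (a.val * b.val) = wordLength n a.val + wordLength n b.val →
         (D a b).val = a.val * b.val)) →
      ∀ (z s : AffPerm n) (i : ℤ), z.val⁻¹ = z.val → s.val = affS n i →
        ((z.val (i + 1) < z.val i → D s (D z s) = z) ∧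
         (z.val i = i ∧ z.val (i + 1) = i + 1 →
           (D s (D z s)).val = z.val * affS n i) ∧
         (¬ z.val (i + 1) < z.val i → ¬ (z.val i = i ∧ z.val (i + 1) = i + 1) →
           (D s (D z s)).val = affS n i * z.val * affS n i))) := by
  rcases (show n = 1 ∨ 1 < n by omega) with rfl | h1
  · refine ⟨⟨fun a _ => a, ⟨fun _ _ _ => rfl, fun _ _ _ => rfl, fun a b _ => ?_⟩,
      fun D _ => Subsingleton.elim _ _⟩,
      fun D _ z s i _ hs => ⟨fun h => ?_, fun _ => ?_, fun _ h => ?_⟩⟩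
    · rw [Subsingleton.elim b 1]
      simp
    · rw [Subsingleton.elim z 1] at h
      simp at h
    · rw [← hs, Subsingleton.elim (D s (D z s)) 1, Subsingleton.elim z 1, Subsingleton.elim s 1]
      simp
    · exact absurd (by rw [Subsingleton.elim z 1]; simp) h
  · have : Fact (1 < n) := ⟨h1⟩
    have hDem := AffPerm.isDemazureProduct_demazure (n := n)
    refine ⟨⟨AffPerm.demazure, ⟨hDem.assoc, hDem.simple_self, hDem.eq_mul⟩,
      fun D hD => (AffPerm.IsDemazureProduct.mk hD.1 hD.2.1 hD.2.2).unique hDem⟩,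
      fun D hD z s i hz hs => ?_⟩
    obtain rfl : s = AffPerm.simple i := Subtype.ext hs
    exact (AffPerm.IsDemazureProduct.mk hD.1 hD.2.1 hD.2.2).simple_apply_apply_simple
      (Subtype.ext hz) i
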